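/- arXiv:2102.02969 — 2 statements merged into one kernel-verified Lean document; each statement's English description precedes it below -/
import Mathlib

section
/- For any vector u* ∈ ℝ^d with ‖u*‖ = 1 and any matrix U ∈ ℝ^{d×r'}, writing r = Uᵀu* and E = (I - u* u*ᵀ)U, one has the exact identity ‖UUᵀ - u* u*ᵀ‖_F² = (1 - ‖r‖²)² + 2‖E r‖² + ‖E Eᵀ‖_F², and consequently ‖UUᵀ - u* u*ᵀ‖_F² ≤ (1 - ‖r‖²)² + 2‖E‖²‖r‖² + ‖E‖_F⁴. -/
open scoped Matrix

noncomputable def frobInner {d e : ℕ} (X Y : Matrix (Fin d) (Fin e) ℝ) : ℝ :=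
  ∑ i, ∑ j, X i j * Y i j

noncomputable def frobNorm {d e : ℕ} (X : Matrix (Fin d) (Fin e) ℝ) : ℝ :=
  Real.sqrt (frobInner X X)

noncomputable def vecNorm {d : ℕ} (x : Fin d → ℝ) : ℝ :=
  Real.sqrt (∑ i, x i ^ 2)

noncomputable def specNorm {d e : ℕ} (M : Matrix (Fin d) (Fin e) ℝ) : ℝ :=
  ‖LinearMap.toContinuousLinearMap (Matrix.toEuclideanLin M)‖

/-!
Put `r = Uᵀu*` and `E = (I - u*u*ᵀ)U`. Then `U = u* rᵀ + E` and `Eᵀu* = 0`, so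
`UUᵀ - u*u*ᵀ = u*((‖r‖² - 1)u* + Er)ᵀ + (Er)u*ᵀ + EEᵀ`.
The rank-two part is Frobenius-orthogonal to `EEᵀ` because `EEᵀu* = 0`, and its squared norm is
`(1 - ‖r‖²)² + 2‖Er‖²` because `u*` is a unit vector orthogonal to `Er`.
The bound then follows from `‖Er‖ ≤ ‖E‖‖r‖` and submultiplicativity of the Frobenius norm.
-/

open Matrix

section FrobeniusInner

variable {d e : ℕ}

lemma frobInner_comm (X Y : Matrix (Fin d) (Fin e) ℝ) : frobInner X Y = frobInner Y X := by
  simp only [frobInner, mul_comm]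

lemma frobInner_add_left (X Y Z : Matrix (Fin d) (Fin e) ℝ) :
    frobInner (X + Y) Z = frobInner X Z + frobInner Y Z := by
  simp only [frobInner, Matrix.add_apply, add_mul, Finset.sum_add_distrib]

lemma frobInner_add_right (X Y Z : Matrix (Fin d) (Fin e) ℝ) :
    frobInner X (Y + Z) = frobInner X Y + frobInner X Z := by
  rw [frobInner_comm, frobInner_add_left, frobInner_comm Y, frobInner_comm Z]

lemma frobNorm_sq (X : Matrix (Fin d) (Fin e) ℝ) : frobNorm X ^ 2 = frobInner X X :=
  Real.sq_sqrt <| Finset.sum_nonneg fun i _ => Finset.sum_nonneg fun j _ => mul_self_nonneg (X i j)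

lemma frobNorm_add_sq (X Y : Matrix (Fin d) (Fin e) ℝ) :
    frobNorm (X + Y) ^ 2 = frobNorm X ^ 2 + 2 * frobInner X Y + frobNorm Y ^ 2 := by
  simp only [frobNorm_sq, frobInner_add_left, frobInner_add_right, frobInner_comm Y X]
  ring

lemma frobInner_vecMulVec_left (x : Fin d → ℝ) (y : Fin e → ℝ) (Y : Matrix (Fin d) (Fin e) ℝ) :
    frobInner (vecMulVec x y) Y = x ⬝ᵥ (Y *ᵥ y) := by
  simp only [frobInner, vecMulVec_apply, dotProduct, mulVec, Finset.mul_sum]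
  exact Finset.sum_congr rfl fun i _ => Finset.sum_congr rfl fun j _ => by ring

lemma frobNorm_vecMulVec_add_vecMulVec_sq (x z : Fin d → ℝ) (y w : Fin e → ℝ) :
    frobNorm (vecMulVec x y + vecMulVec z w) ^ 2
      = (x ⬝ᵥ x) * (y ⬝ᵥ y) + 2 * ((x ⬝ᵥ z) * (y ⬝ᵥ w)) + (z ⬝ᵥ z) * (w ⬝ᵥ w) := by
  rw [frobNorm_add_sq, frobNorm_sq, frobNorm_sq]
  simp only [frobInner_vecMulVec_left, vecMulVec_mulVec, op_smul_eq_smul, dotProduct_smul,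
    smul_eq_mul, dotProduct_comm w y]
  ring

end FrobeniusInner

section FrobeniusNorm

attribute [local instance] Matrix.frobeniusNormedAddCommGroup

lemma frobNorm_eq_norm {d e : ℕ} (X : Matrix (Fin d) (Fin e) ℝ) : frobNorm X = ‖X‖ := by
  rw [frobenius_norm_def, ← Real.sqrt_eq_rpow, frobNorm, frobInner]
  simp only [Real.norm_eq_abs, Real.rpow_two, sq, abs_mul_abs_self]

lemma frobNorm_mul_transpose_self_le {d e : ℕ} (X : Matrix (Fin d) (Fin e) ℝ) :
    frobNorm (X * Xᵀ) ≤ frobNorm X ^ 2 := by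
  simpa only [frobNorm_eq_norm, frobenius_norm_transpose, sq] using frobenius_norm_mul X Xᵀ

end FrobeniusNorm

lemma vecNorm_sq {d : ℕ} (x : Fin d → ℝ) : vecNorm x ^ 2 = x ⬝ᵥ x := by
  rw [vecNorm, Real.sq_sqrt (Finset.sum_nonneg fun i _ => sq_nonneg _)]
  simp only [dotProduct, sq]

lemma vecNorm_eq_norm_toLp {d : ℕ} (x : Fin d → ℝ) : vecNorm x = ‖WithLp.toLp 2 x‖ := by
  simp only [EuclideanSpace.norm_eq, vecNorm, Real.norm_eq_abs, sq_abs]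

lemma vecNorm_mulVec_le {d e : ℕ} (M : Matrix (Fin d) (Fin e) ℝ) (x : Fin e → ℝ) :
    vecNorm (M *ᵥ x) ≤ specNorm M * vecNorm x := by
  simpa only [vecNorm_eq_norm_toLp, specNorm, LinearMap.coe_toContinuousLinearMap',
    toLpLin_toLp, toLin'_apply] using
    (LinearMap.toContinuousLinearMap (toEuclideanLin M)).le_opNorm (WithLp.toLp 2 x)

lemma vecMul_one_sub_vecMulVec_self {m R : Type*} [Fintype m] [DecidableEq m] [CommRing R]
    {u : m → R} (hu : u ⬝ᵥ u = 1) : u ᵥ* (1 - vecMulVec u u) = 0 := by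
  rw [vecMul_sub, vecMul_one, vecMul_vecMulVec, hu, one_smul, sub_self]

lemma mul_transpose_sub_vecMulVec_eq {m n R : Type*} [Fintype n] [CommRing R]
    {U E : Matrix m n R} {u : m → R} {r : n → R} (hU : U = vecMulVec u r + E) :
    U * Uᵀ - vecMulVec u u
      = vecMulVec u ((r ⬝ᵥ r - 1) • u + E *ᵥ r) + vecMulVec (E *ᵥ r) u + E * Eᵀ := by
  subst hU
  rw [transpose_add, transpose_vecMulVec, Matrix.add_mul, Matrix.mul_add, Matrix.mul_add,
    vecMulVec_mul_vecMulVec]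
  simp only [mul_vecMulVec, vecMulVec_mul, vecMul_transpose, vecMulVec_add, vecMulVec_smul,
    sub_smul, one_smul, vecMulVec_sub]
  abel

theorem frobNorm_mul_transpose_sub_vecMulVec_sq {d e : ℕ} {u : Fin d → ℝ} (hu : u ⬝ᵥ u = 1)
    {U E : Matrix (Fin d) (Fin e) ℝ} {r : Fin e → ℝ} (hr : r = Uᵀ *ᵥ u)
    (hE : E = (1 - vecMulVec u u) * U) :
    frobNorm (U * Uᵀ - vecMulVec u u) ^ 2
      = (1 - r ⬝ᵥ r) ^ 2 + 2 * (E *ᵥ r ⬝ᵥ E *ᵥ r) + frobNorm (E * Eᵀ) ^ 2 := by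
  have hEu : u ᵥ* E = 0 := by
    rw [hE, ← vecMul_vecMul, vecMul_one_sub_vecMulVec_self hu, zero_vecMul]
  have hU : U = vecMulVec u r + E := by
    rw [hr, hE, Matrix.sub_mul, Matrix.one_mul, vecMulVec_mul, mulVec_transpose, add_sub_cancel]
  have hua : u ⬝ᵥ E *ᵥ r = 0 := by
    rw [dotProduct_mulVec, hEu, zero_dotProduct]
  have horth : ∀ x y, frobInner (vecMulVec u x + vecMulVec y u) (E * Eᵀ) = 0 := by
    intro x y
    have hEtu : Eᵀ *ᵥ u = 0 := by rw [mulVec_transpose, hEu]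
    rw [frobInner_add_left, frobInner_vecMulVec_left, frobInner_vecMulVec_left, ← mulVec_mulVec,
      ← mulVec_mulVec, hEtu, mulVec_zero, dotProduct_zero, dotProduct_mulVec, hEu, zero_dotProduct,
      add_zero]
  rw [mul_transpose_sub_vecMulVec_eq hU, frobNorm_add_sq, horth,
    frobNorm_vecMulVec_add_vecMulVec_sq]
  simp only [dotProduct_add, add_dotProduct, smul_dotProduct, dotProduct_smul, smul_eq_mul, hu, hua,
    dotProduct_comm (E *ᵥ r) u]
  ring

/-- Decomposing `U = u* rᵀ + E` with `r = Uᵀ u*` and `E = (I - u* u*ᵀ) U`, one has the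
exact identity `‖UUᵀ - u*u*ᵀ‖_F² = (1-‖r‖²)² + 2‖Er‖² + ‖EEᵀ‖_F²` and consequently
`‖UUᵀ - u*u*ᵀ‖_F² ≤ (1-‖r‖²)² + 2‖E‖²‖r‖² + ‖E‖_F⁴`. -/
theorem error_signal_decomposition
    {d r' : ℕ} (ustar : Fin d → ℝ) (hu : vecNorm ustar = 1)
    (U : Matrix (Fin d) (Fin r') ℝ)
    (r : Fin r' → ℝ) (hr : r = Uᵀ.mulVec ustar)
    (E : Matrix (Fin d) (Fin r') ℝ)
    (hE : E = (1 - Matrix.vecMulVec ustar ustar) * U) :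
    frobNorm (U * Uᵀ - Matrix.vecMulVec ustar ustar) ^ 2
      = (1 - vecNorm r ^ 2) ^ 2 + 2 * vecNorm (E.mulVec r) ^ 2 + frobNorm (E * Eᵀ) ^ 2
    ∧ frobNorm (U * Uᵀ - Matrix.vecMulVec ustar ustar) ^ 2
      ≤ (1 - vecNorm r ^ 2) ^ 2 + 2 * specNorm E ^ 2 * vecNorm r ^ 2 + frobNorm E ^ 4 := by
  have hu' : ustar ⬝ᵥ ustar = 1 := by rw [← vecNorm_sq, hu, one_pow]
  have hid := frobNorm_mul_transpose_sub_vecMulVec_sq hu' hr hE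
  rw [← vecNorm_sq, ← vecNorm_sq] at hid
  refine ⟨hid, hid ▸ ?_⟩
  have hEr : vecNorm (E *ᵥ r) ^ 2 ≤ specNorm E ^ 2 * vecNorm r ^ 2 := by
    rw [← mul_pow]
    exact pow_le_pow_left₀ (Real.sqrt_nonneg _) (vecNorm_mulVec_le E r) 2
  have hEE : frobNorm (E * Eᵀ) ^ 2 ≤ frobNorm E ^ 4 := by
    calc frobNorm (E * Eᵀ) ^ 2 ≤ (frobNorm E ^ 2) ^ 2 :=
          pow_le_pow_left₀ (Real.sqrt_nonneg _) (frobNorm_mul_transpose_self_le E) 2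
      _ = frobNorm E ^ 4 := by ring
  linarith
end

section
/- For any vector u* ∈ ℝ^d with ‖u*‖ = 1 and any matrix U ∈ ℝ^{d×r'}, writing r = Uᵀu* and E = (I - u* u*ᵀ)U, one has ‖UUᵀ - u* u*ᵀ‖_F² ≥ (1 - ‖r‖²)². -/
open scoped Matrix

lemma frob_cauchy {d e : ℕ} (X Y : Matrix (Fin d) (Fin e) ℝ) :
    frobInner X Y ^ 2 ≤ frobInner X X * frobInner Y Y := by
  have h := Finset.sum_mul_sq_le_sq_mul_sq Finset.univ
    (fun p : Fin d × Fin e => X p.1 p.2) (fun p : Fin d × Fin e => Y p.1 p.2)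
  simpa [frobInner, Fintype.sum_prod_type, pow_two, Finset.mul_sum, Finset.sum_mul,
    mul_comm, mul_left_comm, mul_assoc] using h

/-- With `r = Uᵀ u*`, one has `‖UUᵀ - u*u*ᵀ‖_F² ≥ (1-‖r‖²)²`. -/
theorem error_lower_bound
    {d r' : ℕ} (ustar : Fin d → ℝ) (hu : vecNorm ustar = 1)
    (U : Matrix (Fin d) (Fin r') ℝ)
    (r : Fin r' → ℝ) (hr : r = Uᵀ.mulVec ustar)
    (E : Matrix (Fin d) (Fin r') ℝ)
    (hE : E = (1 - Matrix.vecMulVec ustar ustar) * U) :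
    (1 - vecNorm r ^ 2) ^ 2 ≤ frobNorm (U * Uᵀ - Matrix.vecMulVec ustar ustar) ^ 2 := by
  set M := U * Uᵀ - Matrix.vecMulVec ustar ustar with hM
  have hMM : 0 ≤ frobInner M M := by
    apply Finset.sum_nonneg; intro i _; apply Finset.sum_nonneg; intro j _
    exact mul_self_nonneg _
  have hfn : frobNorm M ^ 2 = frobInner M M := Real.sq_sqrt hMM
  have husq : (∑ i, ustar i ^ 2) = 1 := by
    have h1 : Real.sqrt (∑ i, ustar i ^ 2) = 1 := hu
    have h2 : (0:ℝ) ≤ ∑ i, ustar i ^ 2 :=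
      Finset.sum_nonneg (fun i _ => sq_nonneg (ustar i))
    nlinarith [Real.sq_sqrt h2]
  have hrsq : vecNorm r ^ 2 = ∑ k, r k ^ 2 :=
    Real.sq_sqrt (Finset.sum_nonneg (fun i _ => sq_nonneg (r i)))
  have huu : frobInner (Matrix.vecMulVec ustar ustar) (Matrix.vecMulVec ustar ustar) = 1 := by
    simp only [frobInner, Matrix.vecMulVec_apply]
    have : ∀ i, ∑ j, ustar i * ustar j * (ustar i * ustar j)
        = ustar i ^ 2 * ∑ j, ustar j ^ 2 := by
      intro i; rw [Finset.mul_sum]; congr 1; ext j; ring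
    simp_rw [this, husq, mul_one, husq]
  have hkey : frobInner M (Matrix.vecMulVec ustar ustar) = (∑ k, r k ^ 2) - 1 := by
    simp only [frobInner, hM, Matrix.sub_apply, Matrix.mul_apply, Matrix.vecMulVec_apply,
      Matrix.transpose_apply, sub_mul, Finset.sum_sub_distrib]
    have h1 : (∑ i, ∑ j, (∑ k, U i k * U j k) * (ustar i * ustar j)) = ∑ k, r k ^ 2 := by
      have hrk : ∀ k, r k = ∑ i, U i k * ustar i := by
        intro k; rw [hr]; rfl
      have step1 : ∀ i j, (∑ k, U i k * U j k) * (ustar i * ustar j)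
          = ∑ k, (U i k * ustar i) * (U j k * ustar j) := by
        intro i j; rw [Finset.sum_mul]; apply Finset.sum_congr rfl; intro k _; ring
      have step2 : ∀ i, (∑ j, ∑ k, (U i k * ustar i) * (U j k * ustar j))
          = ∑ k, (U i k * ustar i) * (∑ j, U j k * ustar j) := by
        intro i; rw [Finset.sum_comm]
        apply Finset.sum_congr rfl; intro k _; rw [← Finset.mul_sum]
      simp_rw [step1, step2]
      rw [Finset.sum_comm]
      apply Finset.sum_congr rfl; intro k _
      rw [← Finset.sum_mul, hrk k, pow_two]
    have h2 : (∑ i, ∑ j, ustar i * ustar j * (ustar i * ustar j)) = 1 := by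
      have : ∀ i, ∑ j, ustar i * ustar j * (ustar i * ustar j)
          = ustar i ^ 2 * ∑ j, ustar j ^ 2 := by
        intro i; rw [Finset.mul_sum]; congr 1; ext j; ring
      simp_rw [this, husq, mul_one, husq]
    rw [h1, h2]
  have hcs := frob_cauchy M (Matrix.vecMulVec ustar ustar)
  rw [huu, mul_one, hkey] at hcs
  rw [hfn, hrsq]
  calc (1 - ∑ k, r k ^ 2) ^ 2 = ((∑ k, r k ^ 2) - 1) ^ 2 := by ring
    _ ≤ frobInner M M := hcs
end
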